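/- The number of symmetric difference configurations of ℓ-tuples of words in F_2^n equals the binomial coefficient C(n + 2^ℓ - 1, 2^ℓ - 1). -/
import Mathlib


open Finset

/-- The symmetric difference configuration of an `ℓ`-tuple of words in `𝔽₂ⁿ`:
to each `J ⊆ [ℓ]` it assigns the Hamming weight of `∑_{j ∈ J} z j`. -/
def sdConfig (n ℓ : ℕ) (z : Fin ℓ → (Fin n → ZMod 2)) : Finset (Fin ℓ) → ℕ :=
  fun J => hammingNorm (∑ j ∈ J, z j)

namespace SDCAux

variable {n ℓ : ℕ}

/-- The sign character. -/
def eps (v : Fin ℓ → ZMod 2) (J : Finset (Fin ℓ)) : ℤ :=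
  (-1) ^ (∑ j ∈ J, v j).val

lemma neg_one_pow_add : ∀ a b : ZMod 2,
    ((-1 : ℤ)) ^ (a + b).val = (-1) ^ a.val * (-1) ^ b.val := by decide

lemma eps_eq_prod (v : Fin ℓ → ZMod 2) (J : Finset (Fin ℓ)) :
    eps v J = ∏ j ∈ J, (-1 : ℤ) ^ (v j).val := by
  classical
  induction J using Finset.cons_induction with
  | empty => simp [eps]
  | cons a s ha ih =>
      rw [eps, Finset.sum_cons, neg_one_pow_add, Finset.prod_cons, ← eps, ih]

lemma sum_eps (v : Fin ℓ → ZMod 2) :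
    ∑ J : Finset (Fin ℓ), eps v J = if v = 0 then 2 ^ ℓ else 0 := by
  classical
  have h : ∑ J : Finset (Fin ℓ), eps v J = ∏ j, ((-1 : ℤ) ^ (v j).val + 1) := by
    rw [Finset.prod_add, Finset.powerset_univ]
    simp [eps_eq_prod]
  rw [h]
  split_ifs with hv
  · subst hv
    simp [Finset.prod_const]
  · obtain ⟨j, hj⟩ := Function.ne_iff.mp hv
    refine Finset.prod_eq_zero (Finset.mem_univ j) ?_
    simp only [Pi.zero_apply] at hj
    have h1 : v j = 1 := by
      revert hj
      generalize v j = a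
      revert a; decide
    rw [h1]; decide

lemma pi_add_eq_zero_iff (v w : Fin ℓ → ZMod 2) : v + w = 0 ↔ v = w := by
  constructor
  · intro h
    funext j
    have h2 : ∀ a b : ZMod 2, a + b = 0 → a = b := by decide
    exact h2 _ _ (by simpa using congrFun h j)
  · rintro rfl
    funext j
    have h2 : ∀ a : ZMod 2, a + a = 0 := by decide
    simpa using h2 (v j)

lemma sum_eps_mul (v w : Fin ℓ → ZMod 2) :
    ∑ J : Finset (Fin ℓ), eps v J * eps w J = if v = w then 2 ^ ℓ else 0 := by
  classical
  have h1 : ∀ J : Finset (Fin ℓ), eps v J * eps w J = eps (v + w) J := by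
    intro J
    have h2 : (∑ j ∈ J, (v + w) j) = (∑ j ∈ J, v j) + ∑ j ∈ J, w j := by
      simp [Finset.sum_add_distrib]
    simp only [eps, h2, neg_one_pow_add]
  simp only [h1, sum_eps, pi_add_eq_zero_iff]

lemma eval_zero (d : (Fin ℓ → ZMod 2) → ℤ)
    (h : ∀ J : Finset (Fin ℓ), ∑ v, d v * eps v J = 0) (w : Fin ℓ → ZMod 2) :
    d w = 0 := by
  classical
  have h2 : ∑ J : Finset (Fin ℓ), (∑ v, d v * eps v J) * eps w J = 0 := by simp [h]
  have h3 : ∑ J : Finset (Fin ℓ), (∑ v, d v * eps v J) * eps w J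
      = ∑ v, d v * ∑ J : Finset (Fin ℓ), eps v J * eps w J := by
    simp only [Finset.sum_mul, Finset.mul_sum]
    rw [Finset.sum_comm]
    exact Finset.sum_congr rfl fun v _ => Finset.sum_congr rfl fun J _ => by ring
  rw [h3] at h2
  simp only [sum_eps_mul, mul_ite, mul_zero, Finset.sum_ite_eq', Finset.mem_univ,
    if_true] at h2
  rcases mul_eq_zero.mp h2 with h4 | h4
  · exact h4
  · exact absurd h4 (by positivity)

/-- indicator that `∑_{j∈J} v j = 1`. -/
def ind (v : Fin ℓ → ZMod 2) (J : Finset (Fin ℓ)) : ℕ :=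
  if (∑ j ∈ J, v j) = 1 then 1 else 0

/-- The configuration associated to a column-count function. -/
def Fm (ℓ : ℕ) (m : (Fin ℓ → ZMod 2) → ℕ) : Finset (Fin ℓ) → ℕ :=
  fun J => ∑ v, m v * ind v J

lemma eps_eq_one_sub (v : Fin ℓ → ZMod 2) (J : Finset (Fin ℓ)) :
    eps v J = 1 - 2 * (ind v J : ℤ) := by
  simp only [eps, ind]
  generalize (∑ j ∈ J, v j) = a
  revert a; decide

/-- counts of columns. -/
def cnt (c : Fin n → (Fin ℓ → ZMod 2)) (v : Fin ℓ → ZMod 2) : ℕ :=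
  (univ.filter fun i => c i = v).card

lemma sum_cnt (c : Fin n → (Fin ℓ → ZMod 2)) : ∑ v, cnt c v = n := by
  classical
  have h := Finset.card_eq_sum_card_fiberwise
    (s := (univ : Finset (Fin n))) (t := (univ : Finset (Fin ℓ → ZMod 2)))
    (f := c) (fun x _ => mem_univ _)
  simpa [cnt, Finset.card_univ] using h.symm

lemma card_filter_eq_sum (c : Fin n → (Fin ℓ → ZMod 2)) (P : (Fin ℓ → ZMod 2) → Prop)
    [DecidablePred P] :
    (univ.filter fun i => P (c i)).card = ∑ v, (if P v then 1 else 0) * cnt c v := by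
  classical
  rw [Finset.card_eq_sum_card_fiberwise
    (f := c) (t := (univ : Finset (Fin ℓ → ZMod 2))) (fun x _ => mem_univ _)]
  refine Finset.sum_congr rfl fun v _ => ?_
  by_cases h : P v
  · simp only [h, if_true, one_mul]
    congr 1
    ext i
    simp only [Finset.mem_filter, Finset.mem_univ, true_and, cnt]
    constructor
    · rintro ⟨_, h2⟩; exact h2
    · intro h2; exact ⟨h2 ▸ h, h2⟩
  · simp only [h, if_false, zero_mul, Finset.card_eq_zero]
    rw [Finset.filter_eq_empty_iff]
    intro i hi hc
    rw [Finset.mem_filter] at hi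
    exact h (hc ▸ hi.2)

lemma sdConfig_eq (z : Fin ℓ → Fin n → ZMod 2) :
    sdConfig n ℓ z = Fm ℓ (cnt fun i j => z j i) := by
  classical
  funext J
  set c : Fin n → (Fin ℓ → ZMod 2) := fun i j => z j i with hc
  have h1 : sdConfig n ℓ z J
      = (univ.filter fun i => (fun v => (∑ j ∈ J, v j) = 1) (c i)).card := by
    simp only [sdConfig, hammingNorm]
    refine congrArg Finset.card (Finset.filter_congr fun i _ => ?_)
    rw [Finset.sum_apply]
    have h2 : ∀ a : ZMod 2, (¬ a = 0) ↔ a = 1 := by decide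
    exact h2 _
  rw [h1, card_filter_eq_sum c (fun v => (∑ j ∈ J, v j) = 1)]
  simp [Fm, ind, mul_comm]

lemma card_multiset_sum {α β : Type*} (s : Finset β) (f : β → Multiset α) :
    Multiset.card (∑ b ∈ s, f b) = ∑ b ∈ s, Multiset.card (f b) := by
  classical
  induction s using Finset.cons_induction with
  | empty => simp
  | cons a t ha ih => simp [Finset.sum_cons, ih]

lemma exists_cnt (m : (Fin ℓ → ZMod 2) → ℕ) (hm : ∑ v, m v = n) :
    ∃ c : Fin n → (Fin ℓ → ZMod 2), cnt c = m := by
  classical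
  set s : Multiset (Fin ℓ → ZMod 2) := ∑ v, m v • ({v} : Multiset (Fin ℓ → ZMod 2)) with hs
  have hcard : Multiset.card s = n := by
    rw [hs, card_multiset_sum]
    simpa [Multiset.card_nsmul] using hm
  obtain ⟨c, hc⟩ : ∃ c : Fin n → (Fin ℓ → ZMod 2), Multiset.map c univ.val = s := by
    subst hcard
    refine ⟨fun i => s.toList.get (Fin.cast (Multiset.length_toList s).symm i), ?_⟩
    have huniv : (univ : Finset (Fin (Multiset.card s))).val
        = ((List.finRange (Multiset.card s) : List (Fin (Multiset.card s))) :
            Multiset (Fin (Multiset.card s))) := by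
      rw [Fin.univ_def]
    rw [huniv, Multiset.map_coe, ← List.ofFn_eq_map,
      ← List.ofFn_congr (Multiset.length_toList s) s.toList.get, List.ofFn_get,
      Multiset.coe_toList]
  refine ⟨c, ?_⟩
  funext v
  have h1 : cnt c v = Multiset.count v s := by
    rw [← hc, Multiset.count_map]
    simp only [cnt, Finset.card, Finset.filter_val]
    congr 1
    refine Multiset.filter_congr fun x _ => ?_
    exact eq_comm
  rw [h1, hs]
  simp [Multiset.count_sum', Multiset.count_nsmul, Multiset.count_singleton,
    Finset.sum_ite_eq]

lemma sum_count_univ {α : Type*} [Fintype α] [DecidableEq α] (s : Multiset α) :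
    ∑ v : α, s.count v = Multiset.card s := by
  rw [← Multiset.toFinset_sum_count_eq]
  refine (Finset.sum_subset (Finset.subset_univ _) fun x _ hx => ?_).symm
  exact Multiset.count_eq_zero.mpr fun h => hx (Multiset.mem_toFinset.mpr h)

/-- The equivalence between count functions summing to `n` and multisets of size `n`. -/
def symEquiv (α : Type*) [Fintype α] [DecidableEq α] (k : ℕ) :
    {m : α → ℕ // ∑ v, m v = k} ≃ Sym α k where
  toFun m := ⟨∑ v : α, m.1 v • ({v} : Multiset α), by
    rw [card_multiset_sum]; simpa [Multiset.card_nsmul] using m.2⟩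
  invFun s := ⟨fun v => s.1.count v, by rw [sum_count_univ, s.2]⟩
  left_inv m := by
    ext v
    simp [Multiset.count_sum', Multiset.count_nsmul, Multiset.count_singleton,
      Finset.sum_ite_eq]
  right_inv s := by
    ext v
    simp [Multiset.count_sum', Multiset.count_nsmul, Multiset.count_singleton,
      Finset.sum_ite_eq]

lemma injOn_Fm : Set.InjOn (Fm ℓ) {m | ∑ v, m v = n} := by
  classical
  intro a ha b hb hab
  set d : (Fin ℓ → ZMod 2) → ℤ := fun v => (a v : ℤ) - b v with hd
  have hzero : ∀ J : Finset (Fin ℓ), ∑ v, d v * eps v J = 0 := by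
    intro J
    have h1 : (∑ v, d v) = 0 := by
      rw [hd]
      rw [Finset.sum_sub_distrib]
      have : ((∑ v, a v : ℕ) : ℤ) = ((∑ v, b v : ℕ) : ℤ) := by
        rw [ha, hb]
      push_cast at this
      omega
    have h2 : ∑ v, d v * (ind v J : ℤ) = 0 := by
      have h3 := congrFun hab J
      simp only [Fm] at h3
      have h4 : ((∑ v, a v * ind v J : ℕ) : ℤ) = ((∑ v, b v * ind v J : ℕ) : ℤ) := by
        rw [h3]
      push_cast at h4
      simp only [hd, sub_mul, Finset.sum_sub_distrib, h4, sub_self]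
    calc ∑ v, d v * eps v J
        = ∑ v, (d v - 2 * (d v * (ind v J : ℤ))) := by
          refine Finset.sum_congr rfl fun v _ => ?_
          rw [eps_eq_one_sub]; ring
      _ = (∑ v, d v) - 2 * ∑ v, d v * (ind v J : ℤ) := by
          rw [Finset.sum_sub_distrib, Finset.mul_sum]
      _ = 0 := by rw [h1, h2]; ring
  funext v
  have h5 := eval_zero d hzero v
  simp only [hd, sub_eq_zero] at h5
  exact_mod_cast h5

end SDCAux

lemma choose_arith (n ℓ : ℕ) :
    (2 ^ ℓ + n - 1).choose n = (n + 2 ^ ℓ - 1).choose (2 ^ ℓ - 1) := by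
  have hN : 1 ≤ 2 ^ ℓ := Nat.one_le_two_pow
  have h1 := Nat.choose_symm (show n ≤ n + 2 ^ ℓ - 1 by omega)
  rw [show n + 2 ^ ℓ - 1 - n = 2 ^ ℓ - 1 by omega] at h1
  rw [show 2 ^ ℓ + n - 1 = n + 2 ^ ℓ - 1 by omega]
  exact h1.symm

theorem card_sdConfig (n ℓ : ℕ) :
    (Set.range (sdConfig n ℓ)).ncard = Nat.choose (n + 2 ^ ℓ - 1) (2 ^ ℓ - 1) := by
  classical
  have hrange : Set.range (sdConfig n ℓ)
      = SDCAux.Fm ℓ '' {m | ∑ v, m v = n} := by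
    ext g
    constructor
    · rintro ⟨z, rfl⟩
      exact ⟨SDCAux.cnt (fun i j => z j i), SDCAux.sum_cnt _, (SDCAux.sdConfig_eq z).symm⟩
    · rintro ⟨m, hm, rfl⟩
      obtain ⟨c, rfl⟩ := SDCAux.exists_cnt m hm
      exact ⟨fun j i => c i j, SDCAux.sdConfig_eq _⟩
  rw [hrange, Set.ncard_image_of_injOn SDCAux.injOn_Fm]
  have hcount : {m : (Fin ℓ → ZMod 2) → ℕ | ∑ v, m v = n}.ncard
      = Fintype.card (Sym (Fin ℓ → ZMod 2) n) := by
    rw [← Nat.card_coe_set_eq, ← Nat.card_eq_fintype_card]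
    exact Nat.card_congr (SDCAux.symEquiv (Fin ℓ → ZMod 2) n)
  rw [hcount, Sym.card_sym_eq_choose]
  have hV : Fintype.card (Fin ℓ → ZMod 2) = 2 ^ ℓ := by simp
  rw [hV]
  exact choose_arith n ℓ
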